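/- Let F be a field of characteristic p > 0, G a finite group with p dividing |G|, and V a faithful G-module. Then the top degree of the vector coinvariants grows unboundedly: lim_{m→∞} topdeg F[V^m]_G = ∞. -/

import Mathlib

open MvPolynomial

variable {F G ι : Type*} [Field F] [Group G] [Fintype ι] [DecidableEq ι]

/-- The (left) action of a group element `σ` on the polynomial algebra
`F[V] = S(V^*)` presented as `MvPolynomial ι F`, for a matrix representation
`ρ : G →* GL(ι, F)` of `G` on `V = (ι → F)`.  It is given by `σ • f = f ∘ σ⁻¹`,
i.e. by linear substitution of the variables using the matrix of `ρ σ⁻¹`. -/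
noncomputable def polyAct (ρ : G →* (Matrix ι ι F)ˣ) (σ : G)
    (f : MvPolynomial ι F) : MvPolynomial ι F :=
  MvPolynomial.aeval
    (fun i => ∑ j, ((ρ σ⁻¹ : Matrix ι ι F) i j) • (MvPolynomial.X j : MvPolynomial ι F)) f

/-- A polynomial is invariant if it is fixed by the action of every group element. -/
def IsInv (ρ : G →* (Matrix ι ι F)ˣ) (f : MvPolynomial ι F) : Prop :=
  ∀ σ : G, polyAct ρ σ f = f

/-- The Hilbert ideal: the ideal of `F[V]` generated by the homogeneous invariants
of positive degree. -/
noncomputable def hilbertIdeal (ρ : G →* (Matrix ι ι F)ˣ) : Ideal (MvPolynomial ι F) :=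
  Ideal.span {f : MvPolynomial ι F | (∃ d, 0 < d ∧ f.IsHomogeneous d) ∧ IsInv ρ f}

/-- The top degree of the coinvariant algebra `F[V]_G = F[V]/(Hilbert ideal)`:
the largest degree `d` such that the degree-`d` homogeneous component of `F[V]_G`
is nonzero; since the Hilbert ideal is homogeneous this is the largest `d` for
which some homogeneous polynomial of degree `d` is not in the Hilbert ideal. -/
noncomputable def topDeg (ρ : G →* (Matrix ι ι F)ˣ) : ℕ :=
  sSup {d : ℕ | ∃ f : MvPolynomial ι F, f.IsHomogeneous d ∧ f ∉ hilbertIdeal ρ}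

/-- The dimension of the coinvariant algebra `F[V]_G` as an `F`-vector space. -/
noncomputable def coinvDim (ρ : G →* (Matrix ι ι F)ˣ) : ℕ :=
  Module.finrank F (MvPolynomial ι F ⧸ hilbertIdeal ρ)

/-- The representation of `G` on the direct sum `V^m` of `m` copies of `V`,
given by block diagonal matrices. -/
noncomputable def glPow (ρ : G →* (Matrix ι ι F)ˣ) (m : ℕ) :
    G →* (Matrix (ι × Fin m) (ι × Fin m) F)ˣ :=
  (Units.map (Matrix.blockDiagonalRingHom ι (Fin m) F).toMonoidHom).comp
    ((Units.map (Pi.constRingHom (Fin m) (Matrix ι ι F)).toMonoidHom).comp ρ)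

/-!
Upper bound: the orbit polynomial `∏ σ, (T - σ • x_v)` of a coordinate `x_v` is monic of degree
`|G|`, vanishes at `x_v` and has homogeneous invariant coefficients, so `x_v ^ |G|` lies in the
Hilbert ideal. Hence so does every homogeneous polynomial of large degree, and the `sSup` defining
`topDeg` is taken over a bounded set.

Lower bound: by Cauchy's theorem some `g ∈ G` has order `p`; faithfulness and
`(g - 1) ^ p = g ^ p - 1 = 0` give vectors with `g d = d ≠ 0` and `g e = e + d`. Substitute the
point `(y₁ d, …, yₘ d)` of `V^m` into an invariant `f`. Differentiating
`f (y d + t eₖ) = f (g (y d + t eₖ)) = f ((y + t δₖ) d + t eₖ)` at `t = 0`, where `eₖ` is `e` in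
the `k`-th copy of `V`, shows that the result is killed by every `∂/∂yₖ`; in characteristic `p`
it therefore lies in `(y₁ ^ p, …, yₘ ^ p)` when `f` is homogeneous of positive degree. This ideal
misses the image `c ∏ₖ yₖ ^ (p - 1)`, `c ≠ 0`, of `∏ₖ x_{i,k} ^ (p - 1)` where `dᵢ ≠ 0`, so
`topDeg F[V^m]_G ≥ m (p - 1)`.
-/

namespace MvPolynomial

section DirDeriv

variable {R τ κ ν : Type*} [CommRing R] [Fintype τ]

noncomputable def dirDeriv (b c : τ → MvPolynomial κ R) (f : MvPolynomial τ R) :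
    MvPolynomial κ R :=
  ∑ v, c v * aeval b (pderiv v f)

variable (b c : τ → MvPolynomial κ R)

@[simp] lemma dirDeriv_C (r : R) : dirDeriv b c (C r) = 0 := by
  simp [dirDeriv]

lemma dirDeriv_add (f g : MvPolynomial τ R) :
    dirDeriv b c (f + g) = dirDeriv b c f + dirDeriv b c g := by
  simp only [dirDeriv, map_add, mul_add, Finset.sum_add_distrib]

lemma dirDeriv_mul (f g : MvPolynomial τ R) :
    dirDeriv b c (f * g) = aeval b f * dirDeriv b c g + aeval b g * dirDeriv b c f := by
  simp only [dirDeriv, pderiv_mul, map_add, map_mul, Finset.mul_sum]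
  rw [← Finset.sum_add_distrib]
  exact Finset.sum_congr rfl fun _ _ => by ring

lemma dirDeriv_X (v : τ) : dirDeriv b c (X v) = c v := by
  classical
  simp [dirDeriv, pderiv_X, Pi.single_apply]

lemma dirDeriv_add_right (c' : τ → MvPolynomial κ R) (f : MvPolynomial τ R) :
    dirDeriv b (c + c') f = dirDeriv b c f + dirDeriv b c' f := by
  simp only [dirDeriv, Pi.add_apply, add_mul, Finset.sum_add_distrib]

lemma dirDeriv_sum_smul_X (u : τ → R) :
    dirDeriv b c (∑ w, u w • X w) = ∑ w, u w • c w := by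
  classical
  simp [dirDeriv, pderiv_X, Pi.single_apply]

lemma dirDeriv_aeval [Fintype ν] (g : ν → MvPolynomial τ R) (f : MvPolynomial ν R) :
    dirDeriv b c (aeval g f) =
      dirDeriv (fun w => aeval b (g w)) (fun w => dirDeriv b c (g w)) f := by
  induction f using MvPolynomial.induction_on with
  | C r => simp
  | add f f' hf hf' => simp only [map_add, dirDeriv_add, hf, hf']
  | mul_X f w hf =>
    simp only [map_mul, aeval_X, dirDeriv_mul, dirDeriv_X, hf, comp_aeval_apply]

lemma pderiv_aeval (k : κ) (f : MvPolynomial τ R) :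
    pderiv k (aeval b f) = dirDeriv b (fun v => pderiv k (b v)) f := by
  induction f using MvPolynomial.induction_on with
  | C r => simp
  | add f f' hf hf' => simp only [map_add, dirDeriv_add, hf, hf']
  | mul_X f w hf =>
    simp only [map_mul, aeval_X, Derivation.leibniz, dirDeriv_mul, dirDeriv_X, hf, smul_eq_mul]

/-- Differentiate `f (b + t c) = f (M b + t M c) = f (b + t (c + ∂ₖ b))` at `t = 0`. -/
lemma pderiv_aeval_eq_zero_of_invariant (M : Matrix τ τ R)
    (k : κ) (hb : ∀ v, ∑ w, M v w • b w = b v)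
    (hc : ∀ v, ∑ w, M v w • c w = c v + pderiv k (b v)) {f : MvPolynomial τ R}
    (hf : aeval (fun v => ∑ w, M v w • X w) f = f) :
    pderiv k (aeval b f) = 0 := by
  have h := congrArg (dirDeriv b c) hf
  simp only [dirDeriv_aeval, map_sum, map_smul, aeval_X, dirDeriv_sum_smul_X, hb, hc] at h
  rwa [← Pi.add_def, dirDeriv_add_right, ← pderiv_aeval, add_eq_left] at h

end DirDeriv

section PowersOfVariables

variable {R κ : Type*} [CommSemiring R]

lemma mem_span_X_pow_iff {n : ℕ} {f : MvPolynomial κ R} :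
    f ∈ Ideal.span (Set.range fun k => (X k : MvPolynomial κ R) ^ n) ↔
      ∀ a ∈ f.support, ∃ k, n ≤ a k := by
  have hgen : Set.range (fun k => (X k : MvPolynomial κ R) ^ n) =
      (fun s => monomial s (1 : R)) '' Set.range fun k => Finsupp.single k n := by
    rw [← Set.range_comp]
    simp only [Function.comp_def, X_pow_eq_monomial]
  rw [hgen, mem_ideal_span_monomial_image]
  simp [Finsupp.single_le_iff]

lemma dvd_of_mem_support_of_pderiv_eq_zero [NoZeroDivisors R] (p : ℕ) [CharP R p]
    {f : MvPolynomial κ R} {k : κ} (hf : pderiv k f = 0) {a : κ →₀ ℕ} (ha : a ∈ f.support) :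
    p ∣ a k := by
  classical
  obtain hak | hak := Nat.eq_zero_or_pos (a k)
  · simp [hak]
  have hcoeff := coeff_pderiv (i := k) f (a - Finsupp.single k 1)
  rw [hf, coeff_zero, tsub_add_cancel_of_le (Finsupp.single_le_iff.mpr hak),
    Finsupp.tsub_apply, Finsupp.single_eq_same] at hcoeff
  rw [← CharP.cast_eq_zero_iff R p, ← Nat.sub_add_cancel hak]
  push_cast
  exact (mul_eq_zero.mp hcoeff.symm).resolve_left (mem_support_iff.mp ha)

lemma mem_span_X_pow_of_pderiv_eq_zero [NoZeroDivisors R] (p : ℕ) [CharP R p]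
    {f : MvPolynomial κ R} (h0 : coeff 0 f = 0) (hf : ∀ k, pderiv k f = 0) :
    f ∈ Ideal.span (Set.range fun k => (X k : MvPolynomial κ R) ^ p) := by
  refine mem_span_X_pow_iff.mpr fun a ha => ?_
  obtain ⟨k, hk⟩ : ∃ k, a k ≠ 0 := by
    by_contra! h
    exact mem_support_iff.mp ha (by rwa [show a = 0 from Finsupp.ext h])
  exact ⟨k, Nat.le_of_dvd (Nat.pos_of_ne_zero hk)
    (dvd_of_mem_support_of_pderiv_eq_zero p (hf k) ha)⟩

lemma mem_of_isHomogeneous_of_forall_X_pow_mem [Fintype κ] {I : Ideal (MvPolynomial κ R)}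
    {n d : ℕ} (hI : ∀ k, X k ^ n ∈ I) {f : MvPolynomial κ R} (hf : f.IsHomogeneous d)
    (hd : Fintype.card κ * (n - 1) < d) : f ∈ I := by
  refine Ideal.span_le.mpr (Set.range_subset_iff.mpr hI) (mem_span_X_pow_iff.mpr fun a ha => ?_)
  have hdeg : ∑ k, a k = d := by
    rw [← Finsupp.degree_eq_sum, Finsupp.degree_eq_weight_one]
    exact hf (mem_support_iff.mp ha)
  have hsum : ∑ _k : κ, (n - 1) < ∑ k, a k := by
    rwa [Finset.sum_const, Finset.card_univ, smul_eq_mul, hdeg]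
  obtain ⟨k, -, hk⟩ := Finset.exists_lt_of_sum_lt hsum
  exact ⟨k, by omega⟩

end PowersOfVariables

lemma isHomogeneous_coeff_prod_X_sub_C {R κ α : Type*} [CommRing R] (s : Finset α)
    (a : α → MvPolynomial κ R) (ha : ∀ x ∈ s, (a x).IsHomogeneous 1) {i : ℕ} (hi : i ≤ s.card) :
    ((∏ x ∈ s, (Polynomial.X - Polynomial.C (a x))).coeff i).IsHomogeneous (s.card - i) := by
  simp_rw [sub_eq_add_neg, ← map_neg, s.prod_X_add_C_coeff _ hi]
  refine IsHomogeneous.sum _ _ _ fun t ht => ?_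
  obtain ⟨hts, htcard⟩ := Finset.mem_powersetCard.mp ht
  simpa [htcard] using IsHomogeneous.prod t _ (fun _ => 1) fun x hx => (ha x (hts hx)).neg

end MvPolynomial

lemma Module.End.exists_apply_ne_zero_and_apply_apply_eq_zero {R M : Type*} [Semiring R]
    [AddCommMonoid M] [Module R M] {f : Module.End R M} (hf : IsNilpotent f) (hf0 : f ≠ 0) :
    ∃ x, f x ≠ 0 ∧ f (f x) = 0 := by
  have : Nontrivial (Module.End R M) := nontrivial_of_ne f 0 hf0
  obtain ⟨k, hk⟩ : ∃ k, nilpotencyClass f = k + 2 := by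
    have := pos_nilpotencyClass_iff.mpr hf
    have := (nilpotencyClass_eq_one (x := f)).not.mpr hf0
    exact ⟨nilpotencyClass f - 2, by omega⟩
  have hpow := pow_nilpotencyClass hf
  rw [hk, pow_succ', pow_succ'] at hpow
  obtain ⟨y, hy⟩ : ∃ y, f ((f ^ k) y) ≠ 0 := by
    by_contra! h
    refine pow_pred_nilpotencyClass hf (LinearMap.ext fun y => ?_)
    rw [hk, show k + 2 - 1 = k + 1 by omega, pow_succ']
    exact h y
  exact ⟨_, hy, LinearMap.congr_fun hpow y⟩

open Matrix in
lemma Matrix.exists_mulVec_eq_add_of_pow_eq_one {K ι : Type*} [Field K] [Fintype ι]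
    [DecidableEq ι] (p : ℕ) [Fact p.Prime] [CharP K p] {N : Matrix ι ι K} (hN : N ^ p = 1)
    (hN1 : N ≠ 1) : ∃ d e : ι → K, d ≠ 0 ∧ N *ᵥ d = d ∧ N *ᵥ e = e + d := by
  -- for the instance `CharP (Matrix ι ι K) p`
  have : Nonempty ι := by
    by_contra h
    have := not_nonempty_iff.mp h
    exact hN1 (Subsingleton.elim _ _)
  have hnil : IsNilpotent (toLinAlgEquiv' (N - 1)) :=
    IsNilpotent.map ⟨p, by rw [sub_pow_char_of_commute _ (Commute.one_right N), hN, one_pow,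
      sub_self]⟩ _
  obtain ⟨e, he, hde⟩ := Module.End.exists_apply_ne_zero_and_apply_apply_eq_zero hnil
    (by simpa [sub_eq_zero] using hN1)
  simp only [toLinAlgEquiv'_apply, sub_mulVec, one_mulVec] at he hde
  exact ⟨_, e, he, sub_eq_zero.mp hde, (add_sub_cancel e _).symm⟩

open Matrix in
lemma sum_blockDiagonal_smul_smul {R M η o : Type*} [CommSemiring R] [AddCommMonoid M]
    [Module R M] [Fintype η] [Fintype o] [DecidableEq o] (N : Matrix η η R) (u : η → R)
    (q : o → M) (i : η) (l : o) :
    ∑ w : η × o, blockDiagonal (fun _ => N) (i, l) w • (u w.1 • q w.2) = (N *ᵥ u) i • q l := by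
  simp [Fintype.sum_prod_type, blockDiagonal_apply, ite_smul, mulVec, dotProduct,
    Finset.sum_smul, smul_smul]

section Coinvariants

variable (ρ : G →* (Matrix ι ι F)ˣ)

lemma polyAct_polyAct (σ τ : G) (f : MvPolynomial ι F) :
    polyAct ρ σ (polyAct ρ τ f) = polyAct ρ (σ * τ) f := by
  unfold polyAct
  rw [comp_aeval_apply]
  congr 2
  funext i
  simp only [map_sum, map_smul, aeval_X, Finset.smul_sum, smul_smul]
  rw [Finset.sum_comm]
  simp_rw [← Finset.sum_smul, ← Matrix.mul_apply, ← Units.val_mul, ← map_mul, mul_inv_rev]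

lemma polyAct_one (f : MvPolynomial ι F) : polyAct ρ 1 f = f := by
  simp [polyAct, Matrix.one_apply]

lemma isHomogeneous_polyAct_X (σ : G) (v : ι) : (polyAct ρ σ (X v)).IsHomogeneous 1 := by
  simp only [polyAct, aeval_X]
  refine IsHomogeneous.sum _ _ _ fun j _ => ?_
  rw [smul_eq_C_mul]
  exact (isHomogeneous_X F j).C_mul _

noncomputable def orbitPoly [Fintype G] (v : ι) : Polynomial (MvPolynomial ι F) :=
  ∏ σ : G, (Polynomial.X - Polynomial.C (polyAct ρ σ (X v)))

variable [Fintype G]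

lemma isInv_coeff_orbitPoly (v : ι) (i : ℕ) : IsInv ρ ((orbitPoly ρ v).coeff i) := by
  intro σ
  let φ : MvPolynomial ι F →+* MvPolynomial ι F :=
    (aeval fun i => ∑ j, ((ρ σ⁻¹ : Matrix ι ι F) i j) • (X j : MvPolynomial ι F)).toRingHom
  have hmap : (orbitPoly ρ v).map φ = orbitPoly ρ v := by
    simp only [orbitPoly, Polynomial.map_prod, Polynomial.map_sub, Polynomial.map_X,
      Polynomial.map_C]
    exact Fintype.prod_equiv (Equiv.mulLeft σ) _ _ fun τ => by
      rw [Equiv.coe_mulLeft, ← polyAct_polyAct]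
      rfl
  exact (Polynomial.coeff_map φ i).symm.trans (congrArg (Polynomial.coeff · i) hmap)

lemma monic_orbitPoly (v : ι) : (orbitPoly ρ v).Monic :=
  Polynomial.monic_prod_of_monic _ _ fun _ _ => Polynomial.monic_X_sub_C _

lemma natDegree_orbitPoly (v : ι) : (orbitPoly ρ v).natDegree = Fintype.card G := by
  rw [orbitPoly, Polynomial.natDegree_prod_of_monic _ _ fun _ _ => Polynomial.monic_X_sub_C _]
  simp

lemma eval_X_orbitPoly (v : ι) : (orbitPoly ρ v).eval (X v) = 0 := by
  rw [orbitPoly, Polynomial.eval_prod]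
  exact Finset.prod_eq_zero (Finset.mem_univ 1) (by simp [polyAct_one])

lemma coeff_orbitPoly_mem_hilbertIdeal (v : ι) {i : ℕ} (hi : i < Fintype.card G) :
    (orbitPoly ρ v).coeff i ∈ hilbertIdeal ρ := by
  have hhom := isHomogeneous_coeff_prod_X_sub_C Finset.univ _
    (fun σ _ => isHomogeneous_polyAct_X ρ σ v) (i := i) (by simpa using hi.le)
  rw [Finset.card_univ] at hhom
  exact Ideal.subset_span ⟨⟨Fintype.card G - i, by omega, hhom⟩, isInv_coeff_orbitPoly ρ v i⟩

lemma X_pow_card_mem_hilbertIdeal (v : ι) : X v ^ Fintype.card G ∈ hilbertIdeal ρ := by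
  have heval := eval_X_orbitPoly ρ v
  rw [(monic_orbitPoly ρ v).as_sum, natDegree_orbitPoly, Polynomial.eval_add, Polynomial.eval_pow,
    Polynomial.eval_X, Polynomial.eval_finsetSum] at heval
  rw [eq_neg_of_add_eq_zero_left heval]
  refine neg_mem (Ideal.sum_mem _ fun i hi => ?_)
  simpa using Ideal.mul_mem_right _ _
    (coeff_orbitPoly_mem_hilbertIdeal ρ v (Finset.mem_range.mp hi))

lemma le_topDeg {d : ℕ} {f : MvPolynomial ι F} (hf : f.IsHomogeneous d)
    (hfI : f ∉ hilbertIdeal ρ) : d ≤ topDeg ρ := by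
  refine le_csSup ⟨Fintype.card ι * (Fintype.card G - 1), fun d' ⟨f', hf', hf'I⟩ => ?_⟩
    ⟨f, hf, hfI⟩
  by_contra! hd'
  exact hf'I (mem_of_isHomogeneous_of_forall_X_pow_mem (X_pow_card_mem_hilbertIdeal ρ) hf' hd')

end Coinvariants

open Matrix in
lemma exists_mulVec_eq_add_of_faithful [Fintype G] (p : ℕ) [CharP F p] (hp : p ≠ 0)
    (hdvd : p ∣ Fintype.card G) (ρ : G →* (Matrix ι ι F)ˣ) (hfaithful : Function.Injective ρ) :
    ∃ g : G, ∃ d e : ι → F, d ≠ 0 ∧ (ρ g : Matrix ι ι F) *ᵥ d = d ∧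
      (ρ g : Matrix ι ι F) *ᵥ e = e + d := by
  have : NeZero p := ⟨hp⟩
  have hprime := CharP.char_is_prime_of_pos F p
  obtain ⟨g, hg⟩ := exists_prime_orderOf_dvd_card p hdvd
  refine ⟨g, exists_mulVec_eq_add_of_pow_eq_one p ?_ fun h => ?_⟩
  · rw [← Units.val_pow_eq_pow_val, ← map_pow, ← hg, pow_orderOf_eq_one, map_one, Units.val_one]
  · have hg1 : g = 1 := hfaithful (Units.ext (by rw [h, map_one, Units.val_one]))
    rw [hg1, orderOf_one] at hg
    exact hprime.out.one_lt.ne hg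

section TensorPoint

variable {K η : Type*} [CommSemiring K] (d : η → K) (m : ℕ)

noncomputable def tensorPoint : η × Fin m → MvPolynomial (Fin m) K :=
  fun w => d w.1 • X w.2

lemma isHomogeneous_tensorPoint (w : η × Fin m) : (tensorPoint d m w).IsHomogeneous 1 := by
  rw [tensorPoint, smul_eq_C_mul]
  exact isHomogeneous_C_mul_X _ _

lemma aeval_tensorPoint_prod_X_pow (i : η) (n : ℕ) :
    aeval (tensorPoint d m) (∏ l : Fin m, (X (i, l) : MvPolynomial (η × Fin m) K) ^ n) =
      monomial (∑ l : Fin m, Finsupp.single l n) (∏ _l : Fin m, d i ^ n) := by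
  simp_rw [monomial_sum_prod, map_prod, map_pow, aeval_X, tensorPoint, smul_eq_C_mul, mul_pow,
    ← map_pow, C_mul_X_pow_eq_monomial]

lemma aeval_tensorPoint_prod_X_pow_notMem_span [NoZeroDivisors K] {p : ℕ} (hp : p ≠ 0) {i : η}
    (hdi : d i ≠ 0) :
    aeval (tensorPoint d m) (∏ l : Fin m, (X (i, l) : MvPolynomial (η × Fin m) K) ^ (p - 1)) ∉
      Ideal.span (Set.range fun k : Fin m => (X k : MvPolynomial (Fin m) K) ^ p) := by
  classical
  have : Nontrivial K := nontrivial_of_ne _ _ hdi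
  rw [aeval_tensorPoint_prod_X_pow, mem_span_X_pow_iff, support_monomial,
    if_neg (Finset.prod_ne_zero_iff.mpr fun _ _ => pow_ne_zero _ hdi)]
  simp only [Finset.mem_singleton, forall_eq, Finsupp.coe_finsetSum, Finset.sum_apply,
    Finsupp.single_apply, Finset.sum_ite_eq', Finset.mem_univ, if_true, not_exists, not_le]
  omega

end TensorPoint

section VectorCoinvariants

open Matrix

variable {ρ : G →* (Matrix ι ι F)ˣ} {m : ℕ}

lemma coe_glPow (σ : G) :
    (glPow ρ m σ : Matrix (ι × Fin m) (ι × Fin m) F) =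
      blockDiagonal fun _ => (ρ σ : Matrix ι ι F) :=
  rfl

variable {g : G} {d e : ι → F}

lemma pderiv_aeval_tensorPoint_eq_zero_of_isInv (hd : (ρ g : Matrix ι ι F) *ᵥ d = d)
    (he : (ρ g : Matrix ι ι F) *ᵥ e = e + d) {f : MvPolynomial (ι × Fin m) F}
    (hf : IsInv (glPow ρ m) f) (k : Fin m) :
    pderiv k (aeval (tensorPoint d m) f) = 0 := by
  refine pderiv_aeval_eq_zero_of_invariant _ (fun w => e w.1 • pderiv k (X w.2))
    (blockDiagonal fun _ => (ρ g : Matrix ι ι F)) k (fun ⟨i, l⟩ => ?_) (fun ⟨i, l⟩ => ?_) ?_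
  · refine (sum_blockDiagonal_smul_smul _ d X i l).trans ?_
    rw [hd, tensorPoint]
  · refine (sum_blockDiagonal_smul_smul _ e (fun l => pderiv k (X l)) i l).trans ?_
    rw [he, Pi.add_apply, add_smul, tensorPoint, Derivation.map_smul]
  · have hfg := hf g⁻¹
    rwa [polyAct, inv_inv, coe_glPow] at hfg

lemma aeval_tensorPoint_mem_span_X_pow (p : ℕ) [CharP F p] (hd : (ρ g : Matrix ι ι F) *ᵥ d = d)
    (he : (ρ g : Matrix ι ι F) *ᵥ e = e + d) {f : MvPolynomial (ι × Fin m) F}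
    (hf : f ∈ hilbertIdeal (glPow ρ m)) :
    aeval (tensorPoint d m) f ∈
      Ideal.span (Set.range fun k : Fin m => (X k : MvPolynomial (Fin m) F) ^ p) := by
  suffices hilbertIdeal (glPow ρ m) ≤ (Ideal.span _).comap (aeval (tensorPoint d m)) from
    this hf
  refine Ideal.span_le.mpr ?_
  rintro f ⟨⟨n, hn, hhom⟩, hinv⟩
  have hhom' := hhom.aeval _ (isHomogeneous_tensorPoint d m)
  exact mem_span_X_pow_of_pderiv_eq_zero p (hhom'.coeff_eq_zero (by simp; omega))
    (pderiv_aeval_tensorPoint_eq_zero_of_isInv hd he hinv)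

lemma mul_pred_le_topDeg_glPow [Fintype G] (p : ℕ) [CharP F p] (hp : p ≠ 0)
    (hd : (ρ g : Matrix ι ι F) *ᵥ d = d) (he : (ρ g : Matrix ι ι F) *ᵥ e = e + d) (hd0 : d ≠ 0) :
    m * (p - 1) ≤ topDeg (glPow ρ m) := by
  obtain ⟨i, hi⟩ := Function.ne_iff.mp hd0
  refine le_topDeg _ (f := ∏ l : Fin m, X (i, l) ^ (p - 1)) ?_ fun hmem =>
    aeval_tensorPoint_prod_X_pow_notMem_span d m hp hi
      (aeval_tensorPoint_mem_span_X_pow p hd he hmem)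
  simpa [mul_comm] using IsHomogeneous.prod (Finset.univ : Finset (Fin m))
    (fun l => X (i, l) ^ (p - 1)) (fun _ => p - 1) fun l _ => isHomogeneous_X_pow (R := F) _ _

end VectorCoinvariants

/-- In the modular case (`char F = p > 0` divides `|G|`), for a
faithful `G`-module `V` the top degree of the vector coinvariants grows
unboundedly: `lim_{m→∞} topdeg F[V^m]_G = ∞`. -/
theorem topDeg_glPow_tendsto_atTop [Fintype G] (p : ℕ) [CharP F p] (hp : p ≠ 0)
    (hdvd : p ∣ Fintype.card G) (ρ : G →* (Matrix ι ι F)ˣ)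
    (hfaithful : Function.Injective ρ) :
    Filter.Tendsto (fun m : ℕ => topDeg (glPow ρ m)) Filter.atTop Filter.atTop := by
  obtain ⟨g, d, e, hd0, hd, he⟩ := exists_mulVec_eq_add_of_faithful p hp hdvd ρ hfaithful
  have hp1 : 1 ≤ p - 1 := by
    have := CharP.char_ne_one F p
    omega
  refine Filter.tendsto_atTop_mono (fun m => ?_) Filter.tendsto_id
  calc m ≤ m * (p - 1) := Nat.le_mul_of_pos_right m hp1
    _ ≤ topDeg (glPow ρ m) := mul_pred_le_topDeg_glPow p hp hd he hd0
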